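/- Let Y be ℝ² with metric |dz|/y on P = {y ≥ 1} and e^{1−y}|dz| on Q = {y < 1}, a = i. Suppose length(β_r) ≤ e^{r/2}/c for all r (with β_r = {y = 1} ∩ D(a, r)) and that each p ∈ Q ∩ D(a, r) admits s ∈ [0, r] with its projection p′ ∈ β_s and d_Q(p, p′) ≤ r − s + O(1), and that the area of {p ∈ Q : p′ ∈ β_s, d_Q(p, p′) ≤ t} is O(t² + t)·length(β_s). Then area(Q ∩ D(a, r)) ≤ C·length(β_r) for all sufficiently large r. -/

import Mathlib

open MeasureTheory

/-- The conformal factor of the surface Y: λ = 1/y on P = {y ≥ 1} and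
λ = e^{1−y} on Q = {y < 1}. -/
noncomputable def lam (z : ℂ) : ℝ :=
  if 1 ≤ z.im then 1 / z.im else Real.exp (1 - z.im)

/-- Length of a path in the metric λ|dz| of Y. -/
noncomputable def pathLen (γ : ℝ → ℂ) : ℝ :=
  ∫ t in (0:ℝ)..1, lam (γ t) * ‖deriv γ t‖

/-- The length metric of Y: infimum of lengths of C¹ paths joining p to q. -/
noncomputable def Ydist (p q : ℂ) : ℝ :=
  sInf {L : ℝ | ∃ γ : ℝ → ℂ, ContDiff ℝ 1 γ ∧ γ 0 = p ∧ γ 1 = q ∧ L = pathLen γ}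

/-- Area of a subset of Y, with area element λ² dx dy. -/
noncomputable def Yarea (S : Set ℂ) : ℝ :=
  ∫ z in S, (lam z) ^ 2

/-- The open metric ball D(a, r) of Y about the basepoint a = i. -/
def Dball (r : ℝ) : Set ℂ := {z : ℂ | Ydist Complex.I z < r}

/-- The length of β_r = β ∩ D(a, r), where β = {y = 1}; since λ = 1 on β this
is the Lebesgue measure of the corresponding set of abscissas. -/
noncomputable def lenBeta (r : ℝ) : ℝ :=
  (volume {x : ℝ | Ydist Complex.I ((x : ℂ) + Complex.I) < r}).toReal

/-- The intrinsic metric of Q ∪ β = {y ≤ 1} with the flat metric e^{1−y}|dz|: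
infimum of lengths of C¹ paths staying in {y ≤ 1}. -/
noncomputable def dQ (p q : ℂ) : ℝ :=
  sInf {L : ℝ | ∃ γ : ℝ → ℂ, ContDiff ℝ 1 γ ∧ (∀ t, (γ t).im ≤ 1) ∧
    γ 0 = p ∧ γ 1 = q ∧
    L = ∫ t in (0:ℝ)..1, Real.exp (1 - (γ t).im) * ‖deriv γ t‖}

/-- The nearest-point projection of p ∈ Q onto β = {y = 1} (the point of β
closest to p, namely the vertical projection p′ = Re p + i). -/
noncomputable def projBeta (p : ℂ) : ℂ := (p.re : ℂ) + Complex.I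

lemma lam_pos (z : ℂ) : 0 < lam z := by
  unfold lam
  split_ifs with h
  · positivity
  · exact Real.exp_pos _

lemma lam_eq (z : ℂ) : lam z = if 1 ≤ z.im then 1 / max z.im 1 else Real.exp (1 - z.im) := by
  unfold lam
  split_ifs with h
  · rw [max_eq_left h]
  · rfl

lemma lam_continuous : Continuous lam := by
  have : lam = fun z : ℂ => if (fun z : ℂ => (1:ℝ)) z ≤ (fun z : ℂ => z.im) z then
      (fun z : ℂ => 1 / max z.im 1) z else (fun z : ℂ => Real.exp (1 - z.im)) z := by
    funext z; exact lam_eq z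
  rw [this]
  apply Continuous.if_le
  · apply Continuous.div continuous_const (Continuous.max Complex.continuous_im continuous_const)
    intro z; positivity
  · exact (Real.continuous_exp.comp (continuous_const.sub Complex.continuous_im))
  · exact continuous_const
  · exact Complex.continuous_im
  · intro z h; simp [← h]

lemma inv_one_add_norm_le_lam (z : ℂ) : 1 / (1 + ‖z‖) ≤ lam z := by
  have hn : (0:ℝ) ≤ ‖z‖ := norm_nonneg _
  unfold lam
  split_ifs with h
  · apply div_le_div_of_nonneg_left (by norm_num) (by linarith)
    have : z.im ≤ ‖z‖ := le_trans (le_abs_self _) (Complex.abs_im_le_norm z)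
    linarith
  · have h1 : 1 / (1 + ‖z‖) ≤ 1 := by
      rw [div_le_one (by linarith)]; linarith
    have h2 : (1:ℝ) ≤ Real.exp (1 - z.im) := by
      rw [Real.one_le_exp_iff]; linarith
    linarith

lemma pathLen_nonneg (γ : ℝ → ℂ) : 0 ≤ pathLen γ := by
  apply intervalIntegral.integral_nonneg (by norm_num)
  intro u _
  exact mul_nonneg (lam_pos _).le (norm_nonneg _)

lemma Ydist_set_nonempty (p q : ℂ) :
    {L : ℝ | ∃ γ : ℝ → ℂ, ContDiff ℝ 1 γ ∧ γ 0 = p ∧ γ 1 = q ∧ L = pathLen γ}.Nonempty := by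
  refine ⟨pathLen (fun t => p + t • (q - p)), fun t => p + t • (q - p), ?_, by simp, by simp, rfl⟩
  exact contDiff_const.add (ContDiff.smul contDiff_id contDiff_const)

lemma Ydist_bddBelow (p q : ℂ) :
    BddBelow {L : ℝ | ∃ γ : ℝ → ℂ, ContDiff ℝ 1 γ ∧ γ 0 = p ∧ γ 1 = q ∧ L = pathLen γ} := by
  refine ⟨0, fun L hL => ?_⟩
  obtain ⟨γ, _, _, _, rfl⟩ := hL
  exact pathLen_nonneg γ

lemma Ydist_nonneg (p q : ℂ) : 0 ≤ Ydist p q :=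
  le_csInf (Ydist_set_nonempty p q) (fun L hL => by
    obtain ⟨γ, _, _, _, rfl⟩ := hL; exact pathLen_nonneg γ)

lemma Ydist_le (p q : ℂ) (γ : ℝ → ℂ) (hγ : ContDiff ℝ 1 γ) (h0 : γ 0 = p) (h1 : γ 1 = q) :
    Ydist p q ≤ pathLen γ :=
  csInf_le (Ydist_bddBelow p q) ⟨γ, hγ, h0, h1, rfl⟩

lemma norm_sub_le_arc (γ : ℝ → ℂ) (hγ : ContDiff ℝ 1 γ) (t : ℝ) (ht : 0 ≤ t) :
    ‖γ t - γ 0‖ ≤ ∫ s in (0:ℝ)..t, ‖deriv γ s‖ := by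
  have hd : Continuous (deriv γ) := (hγ.continuous_deriv le_rfl)
  have h1 : γ t - γ 0 = ∫ s in (0:ℝ)..t, deriv γ s := by
    rw [intervalIntegral.integral_deriv_eq_sub (fun x _ => hγ.differentiable one_ne_zero x)
      (hd.intervalIntegrable _ _)]
  rw [h1]
  exact intervalIntegral.norm_integral_le_integral_norm ht

lemma pathLen_lower (γ : ℝ → ℂ) (hγ : ContDiff ℝ 1 γ) :
    Real.log (1 + ‖γ 1‖) - Real.log (1 + ‖γ 0‖) ≤ pathLen γ := by
  have hd : Continuous (deriv γ) := hγ.continuous_deriv le_rfl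
  have hnc : Continuous fun s => ‖deriv γ s‖ := hd.norm
  set C : ℝ := 1 + ‖γ 0‖ with hC
  have hCpos : 0 < C := by positivity
  set v : ℝ → ℝ := fun t => ∫ s in (0:ℝ)..t, ‖deriv γ s‖ with hv
  have hvderiv : ∀ t : ℝ, HasDerivAt v ‖deriv γ t‖ t := fun t =>
    (hnc.integral_hasStrictDerivAt 0 t).hasDerivAt
  have hvcont : Continuous v := by
    rw [continuous_iff_continuousAt]
    exact fun t => (hvderiv t).differentiableAt.continuousAt
  have hvnonneg : ∀ t ∈ Set.Icc (0:ℝ) 1, 0 ≤ v t := by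
    intro t ht
    exact intervalIntegral.integral_nonneg ht.1 (fun u _ => norm_nonneg _)
  have hCv : ∀ t ∈ Set.Icc (0:ℝ) 1, 0 < C + v t := fun t ht => by
    have := hvnonneg t ht; linarith
  have hnormle : ∀ t ∈ Set.Icc (0:ℝ) 1, 1 + ‖γ t‖ ≤ C + v t := by
    intro t ht
    have h1 : ‖γ t‖ ≤ ‖γ 0‖ + v t := by
      have := norm_sub_le_arc γ hγ t ht.1
      have h2 : ‖γ t‖ - ‖γ 0‖ ≤ ‖γ t - γ 0‖ := norm_sub_norm_le _ _
      simp only [hv]; linarith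
    simp only [hC]; linarith
  have key : ∀ t ∈ Set.Icc (0:ℝ) 1, ‖deriv γ t‖ / (C + v t) ≤ lam (γ t) * ‖deriv γ t‖ := by
    intro t ht
    have h1 : 1 / (C + v t) ≤ lam (γ t) := by
      refine le_trans ?_ (inv_one_add_norm_le_lam (γ t))
      apply div_le_div_of_nonneg_left (by norm_num) (by positivity) (hnormle t ht)
    calc ‖deriv γ t‖ / (C + v t) = 1 / (C + v t) * ‖deriv γ t‖ := by ring
    _ ≤ lam (γ t) * ‖deriv γ t‖ :=
        mul_le_mul_of_nonneg_right h1 (norm_nonneg _)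
  have hlogderiv : ∀ t ∈ Set.uIcc (0:ℝ) 1,
      HasDerivAt (fun u => Real.log (C + v u)) (‖deriv γ t‖ / (C + v t)) t := by
    intro t ht
    rw [Set.uIcc_of_le (by norm_num : (0:ℝ) ≤ 1)] at ht
    exact (HasDerivAt.const_add C (hvderiv t)).log (ne_of_gt (hCv t ht))
  have hcont2 : Continuous fun t => lam (γ t) * ‖deriv γ t‖ :=
    (lam_continuous.comp hγ.continuous).mul hnc
  have hcont1 : ContinuousOn (fun t => ‖deriv γ t‖ / (C + v t)) (Set.uIcc (0:ℝ) 1) := by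
    apply ContinuousOn.div hnc.continuousOn (continuous_const.add hvcont).continuousOn
    intro t ht
    rw [Set.uIcc_of_le (by norm_num : (0:ℝ) ≤ 1)] at ht
    exact ne_of_gt (hCv t ht)
  have hint1 : IntervalIntegrable (fun t => ‖deriv γ t‖ / (C + v t)) volume 0 1 :=
    hcont1.intervalIntegrable
  have hFTC : ∫ t in (0:ℝ)..1, ‖deriv γ t‖ / (C + v t)
      = Real.log (C + v 1) - Real.log (C + v 0) :=
    intervalIntegral.integral_eq_sub_of_hasDerivAt hlogderiv hint1
  have hv0 : v 0 = 0 := intervalIntegral.integral_same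
  have hmono : ∫ t in (0:ℝ)..1, ‖deriv γ t‖ / (C + v t) ≤ pathLen γ :=
    intervalIntegral.integral_mono_on (by norm_num) hint1 (hcont2.intervalIntegrable _ _) key
  have hfin : Real.log (1 + ‖γ 1‖) ≤ Real.log (C + v 1) :=
    Real.log_le_log (by positivity) (hnormle 1 (by norm_num))
  rw [hFTC, hv0] at hmono
  simp only [add_zero] at hmono
  linarith

lemma Ydist_lower (p q : ℂ) :
    Real.log (1 + ‖q‖) - Real.log (1 + ‖p‖) ≤ Ydist p q := by
  apply le_csInf (Ydist_set_nonempty p q)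
  rintro L ⟨γ, hγ, h0, h1, rfl⟩
  have := pathLen_lower γ hγ
  rw [h0, h1] at this
  exact this

lemma im_hasDerivAt (γ : ℝ → ℂ) (hγ : ContDiff ℝ 1 γ) (t : ℝ) :
    HasDerivAt (fun u => (γ u).im) ((deriv γ t).im) t := by
  have h1 : HasDerivAt γ (deriv γ t) t :=
    (hγ.differentiable one_ne_zero t).hasDerivAt
  have := Complex.imCLM.hasFDerivAt.comp_hasDerivAt t h1
  exact this

lemma dQ_set_nonempty (p : ℂ) (hp : p.im ≤ 1) :
    {L : ℝ | ∃ γ : ℝ → ℂ, ContDiff ℝ 1 γ ∧ (∀ t, (γ t).im ≤ 1) ∧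
      γ 0 = p ∧ γ 1 = projBeta p ∧
      L = ∫ t in (0:ℝ)..1, Real.exp (1 - (γ t).im) * ‖deriv γ t‖}.Nonempty := by
  set γ : ℝ → ℂ := fun t => p + Real.sin (Real.pi * t / 2) • (projBeta p - p) with hγdef
  refine ⟨_, γ, ?_, ?_, ?_, ?_, rfl⟩
  · exact contDiff_const.add (ContDiff.smul
      (Real.contDiff_sin.comp ((contDiff_const.mul contDiff_id).div_const 2)) contDiff_const)
  · intro t
    have hs : Real.sin (Real.pi * t / 2) ≤ 1 := Real.sin_le_one _
    have him : (γ t).im = p.im + Real.sin (Real.pi * t / 2) * (1 - p.im) := by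
      simp only [hγdef, Complex.add_im, Complex.smul_im, smul_eq_mul, Complex.sub_im, projBeta,
        Complex.add_im, Complex.I_im, Complex.ofReal_im]
      ring
    rw [him]
    nlinarith [Real.sin_le_one (Real.pi * t / 2)]
  · simp [hγdef]
  · have : Real.sin (Real.pi * 1 / 2) = 1 := by
      rw [mul_one]; exact Real.sin_pi_div_two
    simp [hγdef, this]

lemma dQ_lower (p : ℂ) (hp : p.im ≤ 1) :
    Real.exp (1 - p.im) - 1 ≤ dQ p (projBeta p) := by
  apply le_csInf (dQ_set_nonempty p hp)
  rintro L ⟨γ, hγ, him, h0, h1, rfl⟩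
  have hd : Continuous (deriv γ) := hγ.continuous_deriv le_rfl
  have hwc : Continuous fun t => (γ t).im := Complex.continuous_im.comp hγ.continuous
  have hwd : Continuous fun t => (deriv γ t).im := Complex.continuous_im.comp hd
  -- FTC for F t = -exp(1 - im γ t)
  have hF : ∀ t ∈ Set.uIcc (0:ℝ) 1, HasDerivAt (fun u => -Real.exp (1 - (γ u).im))
      (Real.exp (1 - (γ t).im) * (deriv γ t).im) t := by
    intro t _
    have h1 : HasDerivAt (fun u => 1 - (γ u).im) (-(deriv γ t).im) t :=
      (im_hasDerivAt γ hγ t).const_sub 1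
    have h2 := h1.exp
    have h3 : HasDerivAt (fun u => -Real.exp (1 - (γ u).im)) _ t := h2.neg
    convert h3 using 1
    ring
  have hint : IntervalIntegrable (fun t => Real.exp (1 - (γ t).im) * (deriv γ t).im) volume 0 1 :=
    ((Real.continuous_exp.comp (continuous_const.sub hwc)).mul hwd).intervalIntegrable _ _
  have hFTC : ∫ t in (0:ℝ)..1, Real.exp (1 - (γ t).im) * (deriv γ t).im
      = -Real.exp (1 - (γ 1).im) - -Real.exp (1 - (γ 0).im) :=
    intervalIntegral.integral_eq_sub_of_hasDerivAt hF hint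
  have hmono : ∫ t in (0:ℝ)..1, Real.exp (1 - (γ t).im) * (deriv γ t).im
      ≤ ∫ t in (0:ℝ)..1, Real.exp (1 - (γ t).im) * ‖deriv γ t‖ := by
    apply intervalIntegral.integral_mono_on (by norm_num) hint
      (((Real.continuous_exp.comp (continuous_const.sub hwc)).mul hd.norm).intervalIntegrable _ _)
    intro t _
    apply mul_le_mul_of_nonneg_left _ (Real.exp_pos _).le
    exact le_trans (le_abs_self _) (Complex.abs_im_le_norm _)
  rw [hFTC, h0, h1] at hmono
  have : (projBeta p).im = 1 := by simp [projBeta]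
  rw [this] at hmono
  simp only [sub_self, Real.exp_zero] at hmono
  linarith

lemma Ydist_le_abs (x : ℝ) : Ydist Complex.I ((x : ℂ) + Complex.I) ≤ |x| := by
  set γ : ℝ → ℂ := fun t => ((x * t : ℝ) : ℂ) + Complex.I with hγdef
  have hγd : ∀ t : ℝ, HasDerivAt γ ((x : ℂ)) t := by
    intro t
    have h1 : HasDerivAt (fun t : ℝ => x * t) x t := by
      simpa using (hasDerivAt_id t).const_mul x
    exact (h1.ofReal_comp).add_const Complex.I
  have hγ : ContDiff ℝ 1 γ :=
    ((Complex.ofRealCLM.contDiff.comp ((contDiff_const.mul contDiff_id))).add contDiff_const)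
  have h0 : γ 0 = Complex.I := by simp [hγdef]
  have h1 : γ 1 = (x : ℂ) + Complex.I := by simp [hγdef]
  refine le_trans (Ydist_le _ _ γ hγ h0 h1) ?_
  have : pathLen γ = ∫ t in (0:ℝ)..1, |x| := by
    unfold pathLen
    apply intervalIntegral.integral_congr
    intro t _
    show lam (γ t) * ‖deriv γ t‖ = |x|
    have him : (γ t).im = 1 := by simp [hγdef]
    have hd : deriv γ t = (x : ℂ) := (hγd t).deriv
    rw [hd]
    unfold lam
    rw [him]
    simp
  rw [this]
  simp

lemma Ydist_le_log (x : ℝ) (hx : 2 ≤ |x|) :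
    Ydist Complex.I ((x : ℂ) + Complex.I) ≤ 2 * Real.log |x| + 5/2 := by
  set X := |x| with hXdef
  have hX1 : (1:ℝ) < X := by linarith
  set u : ℝ → ℝ := fun t => 10*t^3 - 15*t^4 + 6*t^5 with hudef
  set h : ℝ → ℝ := fun t => 1 + 4*(X-1)*(t - t^2) with hhdef
  set γ : ℝ → ℂ := fun t => ((x * u t : ℝ) : ℂ) + ((h t : ℝ) : ℂ) * Complex.I with hγdef
  have hu : ∀ t : ℝ, HasDerivAt u (30*(t^2*(1-t)^2)) t := by
    intro t
    have h1 : HasDerivAt u (10*(3*t^2) - 15*(4*t^3) + 6*(5*t^4)) t := by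
      apply HasDerivAt.add
      apply HasDerivAt.sub
      · simpa using (hasDerivAt_pow 3 t).const_mul 10
      · simpa using (hasDerivAt_pow 4 t).const_mul 15
      · simpa using (hasDerivAt_pow 5 t).const_mul 6
    convert h1 using 1; ring
  have hh : ∀ t : ℝ, HasDerivAt h (4*(X-1)*(1-2*t)) t := by
    intro t
    have h1 : HasDerivAt (fun t : ℝ => t - t^2) (1 - 2*t) t := by
      have h1' : HasDerivAt (fun t : ℝ => t - t^2) (1 - ((2:ℕ):ℝ) * t^(2-1)) t :=
        (hasDerivAt_id t).sub (hasDerivAt_pow 2 t)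
      simpa using h1'
    simpa [hhdef] using (h1.const_mul (4*(X-1))).const_add 1
  have hγd : ∀ t : ℝ, HasDerivAt γ
      (((x * (30*(t^2*(1-t)^2)) : ℝ) : ℂ) + ((4*(X-1)*(1-2*t) : ℝ) : ℂ) * Complex.I) t := by
    intro t
    exact ((((hu t).const_mul x).ofReal_comp).add (((hh t).ofReal_comp).mul_const Complex.I))
  have hcu : ContDiff ℝ 1 u := by
    simp only [hudef]
    exact ((contDiff_const.mul (contDiff_id.pow 3)).sub
      (contDiff_const.mul (contDiff_id.pow 4))).add (contDiff_const.mul (contDiff_id.pow 5))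
  have hch : ContDiff ℝ 1 h := by
    simp only [hhdef]
    exact contDiff_const.add (contDiff_const.mul (contDiff_id.sub (contDiff_id.pow 2)))
  have hγ : ContDiff ℝ 1 γ := by
    apply ContDiff.add
    · exact Complex.ofRealCLM.contDiff.comp (contDiff_const.mul hcu)
    · exact (Complex.ofRealCLM.contDiff.comp hch).mul contDiff_const
  have him : ∀ t, (γ t).im = h t := by intro t; simp [hγdef]
  have hhpos : ∀ t ∈ Set.Icc (0:ℝ) 1, 1 ≤ h t := by
    intro t ht
    have h1 : 0 ≤ t - t^2 := by nlinarith [ht.1, ht.2]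
    simp only [hhdef]
    nlinarith
  have h0 : γ 0 = Complex.I := by
    simp [hγdef, hudef, hhdef]
  have h1 : γ 1 = (x : ℂ) + Complex.I := by
    have hu1 : u 1 = 1 := by simp [hudef]; ring
    have hh1 : h 1 = 1 := by simp [hhdef]
    simp [hγdef, hu1, hh1]
  refine le_trans (Ydist_le _ _ γ hγ h0 h1) ?_
  -- bound the integrand by G
  set G : ℝ → ℝ := fun t => 15*t - 15*t^2 + |4*(X-1)*(1-2*t)| / h t with hGdef
  have hcont_h : Continuous h := by fun_prop
  have hGcont : ContinuousOn G (Set.Icc (0:ℝ) 1) := by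
    apply ContinuousOn.add (by fun_prop)
    apply ContinuousOn.div (by fun_prop) hcont_h.continuousOn
    intro t ht; have := hhpos t ht; linarith
  have hintegrand_cont : Continuous fun t => lam (γ t) * ‖deriv γ t‖ := by
    have hd : Continuous (deriv γ) := hγ.continuous_deriv le_rfl
    exact (lam_continuous.comp hγ.continuous).mul hd.norm
  have hmono : pathLen γ ≤ ∫ t in (0:ℝ)..1, G t := by
    unfold pathLen
    apply intervalIntegral.integral_mono_on (by norm_num)
      (hintegrand_cont.intervalIntegrable _ _)
      (ContinuousOn.intervalIntegrable (by
        rw [Set.uIcc_of_le (by norm_num : (0:ℝ) ≤ 1)]; exact hGcont))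
    intro t ht
    have hht := hhpos t ht
    have hlam : lam (γ t) = 1 / h t := by
      unfold lam
      rw [him t, if_pos hht]
    have hd : deriv γ t = ((x * (30*(t^2*(1-t)^2)) : ℝ) : ℂ)
        + ((4*(X-1)*(1-2*t) : ℝ) : ℂ) * Complex.I := (hγd t).deriv
    have hnorm : ‖deriv γ t‖ ≤ |x * (30*(t^2*(1-t)^2))| + |4*(X-1)*(1-2*t)| := by
      rw [hd]
      refine le_trans (norm_add_le _ _) ?_
      rw [norm_mul, Complex.norm_I, mul_one, Complex.norm_real, Complex.norm_real,
        Real.norm_eq_abs, Real.norm_eq_abs]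
    have hX0 : 0 < X := by linarith
    have hxabs : |x * (30*(t^2*(1-t)^2))| = X * (30*(t^2*(1-t)^2)) := by
      rw [abs_mul, ← hXdef]
      congr 1
      rw [abs_of_nonneg]; positivity
    -- lam * norm ≤ (X*u' + |h'|)/h
    have hnorm' : ‖deriv γ t‖ ≤ X * (30*(t^2*(1-t)^2)) + |4*(X-1)*(1-2*t)| := by
      rw [hxabs] at hnorm; exact hnorm
    have step1 : lam (γ t) * ‖deriv γ t‖ ≤ (X * (30*(t^2*(1-t)^2)) + |4*(X-1)*(1-2*t)|) / h t := by
      have heq : lam (γ t) * ‖deriv γ t‖ = ‖deriv γ t‖ / h t := by rw [hlam]; ring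
      rw [heq]
      gcongr
    refine le_trans step1 ?_
    rw [hGdef]
    have hsplit : (X * (30*(t^2*(1-t)^2)) + |4*(X-1)*(1-2*t)|) / h t
        = X * (30*(t^2*(1-t)^2)) / h t + |4*(X-1)*(1-2*t)| / h t := by ring
    rw [hsplit]
    have hmain : X * (30*(t^2*(1-t)^2)) / h t ≤ 15*t - 15*t^2 := by
      rw [div_le_iff₀ (by linarith : (0:ℝ) < h t)]
      have hh2 : 2*X*(t*(1-t)) ≤ h t := by
        simp only [hhdef]
        nlinarith [ht.1, ht.2, mul_nonneg ht.1 (by linarith [ht.2] : (0:ℝ) ≤ 1 - t)]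
      nlinarith [mul_nonneg ht.1 (by linarith [ht.2] : (0:ℝ) ≤ 1 - t),
        mul_le_mul_of_nonneg_left hh2 (mul_nonneg (mul_nonneg (by norm_num : (0:ℝ) ≤ 15) ht.1) (by linarith [ht.2] : (0:ℝ) ≤ 1 - t))]
    linarith
  refine le_trans hmono ?_
  -- compute the integral of G
  have hX0 : (0:ℝ) < X := by linarith
  have hh0 : h 0 = 1 := by simp [hhdef]
  have hh1 : h 1 = 1 := by simp [hhdef]
  have hhhalf : h (1/2) = X := by simp only [hhdef]; ring_nf
  have hsub1 : Set.uIcc (0:ℝ) (1/2) ⊆ Set.Icc (0:ℝ) 1 := by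
    rw [Set.uIcc_of_le (by norm_num : (0:ℝ) ≤ 1/2)]
    exact Set.Icc_subset_Icc (le_refl _) (by norm_num)
  have hsub2 : Set.uIcc (1/2 : ℝ) 1 ⊆ Set.Icc (0:ℝ) 1 := by
    rw [Set.uIcc_of_le (by norm_num : (1/2:ℝ) ≤ 1)]
    exact Set.Icc_subset_Icc (by norm_num) (le_refl _)
  have hint1 : IntervalIntegrable G volume 0 (1/2) :=
    (hGcont.mono hsub1).intervalIntegrable
  have hint2 : IntervalIntegrable G volume (1/2) 1 :=
    (hGcont.mono hsub2).intervalIntegrable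
  have hI1 : ∫ t in (0:ℝ)..(1/2), G t = 5/4 + Real.log X := by
    have hcongr : ∫ t in (0:ℝ)..(1/2), G t
        = ∫ t in (0:ℝ)..(1/2), (15*t - 15*t^2 + (4*(X-1)*(1-2*t)) / h t) := by
      apply intervalIntegral.integral_congr
      intro t ht
      have ht' := hsub1 ht
      rw [Set.uIcc_of_le (by norm_num : (0:ℝ) ≤ 1/2)] at ht
      simp only [hGdef]
      have : |4*(X-1)*(1-2*t)| = 4*(X-1)*(1-2*t) := by
        apply abs_of_nonneg
        have h2 : (0:ℝ) ≤ 1 - 2*t := by linarith [ht.2]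
        have h3 : (0:ℝ) ≤ 4*(X-1) := by linarith
        exact mul_nonneg h3 h2
      rw [this]
    rw [hcongr]
    have hFTC : ∫ t in (0:ℝ)..(1/2), (15*t - 15*t^2 + (4*(X-1)*(1-2*t)) / h t)
        = (15/2*(1/2)^2 - 5*(1/2)^3 + Real.log (h (1/2)))
          - (15/2*(0:ℝ)^2 - 5*(0:ℝ)^3 + Real.log (h 0)) := by
      apply intervalIntegral.integral_eq_sub_of_hasDerivAt
        (f := fun t => 15/2*t^2 - 5*t^3 + Real.log (h t))
      · intro t ht
        have ht' := hsub1 ht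
        have hpos : (0:ℝ) < h t := by linarith [hhpos t ht']
        have hpoly : HasDerivAt (fun t : ℝ => 15/2*t^2 - 5*t^3) (15*t - 15*t^2) t := by
          have : HasDerivAt (fun t : ℝ => 15/2*t^2 - 5*t^3) _ t := ((hasDerivAt_pow 2 t).const_mul (15/2:ℝ)).sub
            ((hasDerivAt_pow 3 t).const_mul (5:ℝ))
          convert this using 1
          push_cast; ring
        have hlog : HasDerivAt (fun t => Real.log (h t)) ((4*(X-1)*(1-2*t)) / h t) t :=
          (hh t).log (ne_of_gt hpos)
        exact hpoly.add hlog
      · apply ContinuousOn.intervalIntegrable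
        apply ContinuousOn.add (by fun_prop)
        apply ContinuousOn.div (by fun_prop) hcont_h.continuousOn
        intro t ht
        have := hhpos t (hsub1 ht); linarith
    rw [hFTC, hhhalf, hh0, Real.log_one]
    ring
  have hI2 : ∫ t in (1/2:ℝ)..1, G t = 5/4 + Real.log X := by
    have hcongr : ∫ t in (1/2:ℝ)..1, G t
        = ∫ t in (1/2:ℝ)..1, (15*t - 15*t^2 - (4*(X-1)*(1-2*t)) / h t) := by
      apply intervalIntegral.integral_congr
      intro t ht
      rw [Set.uIcc_of_le (by norm_num : (1/2:ℝ) ≤ 1)] at ht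
      simp only [hGdef]
      have : |4*(X-1)*(1-2*t)| = -(4*(X-1)*(1-2*t)) := by
        apply abs_of_nonpos
        have h2 : 1 - 2*t ≤ 0 := by linarith [ht.1]
        have h3 : (0:ℝ) ≤ 4*(X-1) := by linarith
        exact mul_nonpos_of_nonneg_of_nonpos h3 h2
      rw [this]
      ring
    rw [hcongr]
    have hFTC : ∫ t in (1/2:ℝ)..1, (15*t - 15*t^2 - (4*(X-1)*(1-2*t)) / h t)
        = (15/2*(1:ℝ)^2 - 5*(1:ℝ)^3 - Real.log (h 1))
          - (15/2*(1/2:ℝ)^2 - 5*(1/2:ℝ)^3 - Real.log (h (1/2))) := by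
      apply intervalIntegral.integral_eq_sub_of_hasDerivAt
        (f := fun t => 15/2*t^2 - 5*t^3 - Real.log (h t))
      · intro t ht
        have ht' := hsub2 ht
        have hpos : (0:ℝ) < h t := by linarith [hhpos t ht']
        have hpoly : HasDerivAt (fun t : ℝ => 15/2*t^2 - 5*t^3) (15*t - 15*t^2) t := by
          have : HasDerivAt (fun t : ℝ => 15/2*t^2 - 5*t^3) _ t := ((hasDerivAt_pow 2 t).const_mul (15/2:ℝ)).sub
            ((hasDerivAt_pow 3 t).const_mul (5:ℝ))
          convert this using 1
          push_cast; ring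
        have hlog : HasDerivAt (fun t => Real.log (h t)) ((4*(X-1)*(1-2*t)) / h t) t :=
          (hh t).log (ne_of_gt hpos)
        exact hpoly.sub hlog
      · apply ContinuousOn.intervalIntegrable
        apply ContinuousOn.sub (by fun_prop)
        apply ContinuousOn.div (by fun_prop) hcont_h.continuousOn
        intro t ht
        have := hhpos t (hsub2 ht); linarith
    rw [hFTC, hhhalf, hh1, Real.log_one]
    ring
  have hsplit : ∫ t in (0:ℝ)..1, G t = (∫ t in (0:ℝ)..(1/2), G t) + ∫ t in (1/2:ℝ)..1, G t :=
    (intervalIntegral.integral_add_adjacent_intervals hint1 hint2).symm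
  rw [hsplit, hI1, hI2]
  linarith

lemma setBeta_subset (r : ℝ) :
    {x : ℝ | Ydist Complex.I ((x : ℂ) + Complex.I) < r}
      ⊆ Set.Icc (-(2*Real.exp r)) (2*Real.exp r) := by
  intro x hx
  simp only [Set.mem_setOf_eq] at hx
  have h1 := Ydist_lower Complex.I ((x : ℂ) + Complex.I)
  have h2 : ‖Complex.I‖ = 1 := Complex.norm_I
  have h3 : |x| ≤ ‖(x : ℂ) + Complex.I‖ := by
    have hre : ((x : ℂ) + Complex.I).re = x := by simp
    calc |x| = |((x : ℂ) + Complex.I).re| := by rw [hre]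
    _ ≤ ‖(x : ℂ) + Complex.I‖ := Complex.abs_re_le_norm _
    _ = ‖(x : ℂ) + Complex.I‖ := rfl
  rw [h2] at h1
  have h4 : Real.log (1 + ‖(x : ℂ) + Complex.I‖) < r + Real.log (1+1) := by linarith
  have h5 : (0:ℝ) < 1 + ‖(x : ℂ) + Complex.I‖ := by positivity
  have h6 : 1 + ‖(x : ℂ) + Complex.I‖ < Real.exp (r + Real.log 2) := by
    have := Real.exp_lt_exp.mpr h4
    rw [Real.exp_log h5] at this
    norm_num at this ⊢
    exact this
  rw [Real.exp_add, Real.exp_log (by norm_num : (0:ℝ) < 2)] at h6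
  have h7 : |x| ≤ 2 * Real.exp r := by
    have := norm_nonneg ((x : ℂ) + Complex.I)
    nlinarith
  rw [Set.mem_Icc]
  exact abs_le.mp h7

lemma setBeta_finite (r : ℝ) :
    volume {x : ℝ | Ydist Complex.I ((x : ℂ) + Complex.I) < r} < ⊤ :=
  lt_of_le_of_lt (measure_mono (setBeta_subset r))
    (by rw [Real.volume_Icc]; exact ENNReal.ofReal_lt_top)

lemma lenBeta_nonneg (r : ℝ) : 0 ≤ lenBeta r := ENNReal.toReal_nonneg

lemma lenBeta_lower (r : ℝ) (hr : 4 ≤ r) : 2 * Real.exp ((r-3)/2) ≤ lenBeta r := by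
  set R := Real.exp ((r-3)/2) with hRdef
  have hsub : Set.Icc (-R) R ⊆ {x : ℝ | Ydist Complex.I ((x : ℂ) + Complex.I) < r} := by
    intro x hx
    rw [Set.mem_Icc] at hx
    have habs : |x| ≤ R := abs_le.mpr hx
    simp only [Set.mem_setOf_eq]
    rcases le_or_gt 2 |x| with h2 | h2
    · have hb := Ydist_le_log x h2
      have hlog : Real.log |x| ≤ (r-3)/2 := by
        have h0 : (0:ℝ) < |x| := by linarith
        calc Real.log |x| ≤ Real.log R := Real.log_le_log h0 habs
        _ = (r-3)/2 := Real.log_exp _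
      linarith
    · have hb := Ydist_le_abs x
      linarith
  have h1 : ENNReal.ofReal (2*R) ≤ volume {x : ℝ | Ydist Complex.I ((x : ℂ) + Complex.I) < r} := by
    refine le_trans (le_of_eq ?_) (measure_mono hsub)
    rw [Real.volume_Icc]
    congr 1
    ring
  unfold lenBeta
  calc 2*R = (ENNReal.ofReal (2*R)).toReal := by
        rw [ENNReal.toReal_ofReal]; positivity
  _ ≤ _ := ENNReal.toReal_mono (setBeta_finite r).ne h1

lemma lam_sq_measurable : Measurable fun z : ℂ => (lam z)^2 :=
  (lam_continuous.pow 2).measurable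

/-- The decomposition sets. -/
def Aset (s t : ℝ) : Set ℂ :=
  {p : ℂ | p.im < 1 ∧ Ydist Complex.I (projBeta p) < s ∧ dQ p (projBeta p) ≤ t}

def Box (s t : ℝ) : Set ℂ :=
  {z : ℂ | |z.re| ≤ 2*Real.exp s ∧ 1 - Real.log (1+t) ≤ z.im ∧ z.im ≤ 1}

lemma Aset_subset_Box (s t : ℝ) (ht : 0 ≤ t) : Aset s t ⊆ Box s t := by
  rintro p ⟨h1, h2, h3⟩
  refine ⟨?_, ?_, h1.le⟩
  · have h2' : p.re ∈ {x : ℝ | Ydist Complex.I ((x : ℂ) + Complex.I) < s} := h2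
    have := setBeta_subset s h2'
    rw [Set.mem_Icc] at this
    exact abs_le.mpr this
  · have hlow := dQ_lower p h1.le
    have h4 : Real.exp (1 - p.im) ≤ 1 + t := by linarith
    have h5 : 1 - p.im ≤ Real.log (1+t) := by
      have := Real.log_le_log (Real.exp_pos _) h4
      rwa [Real.log_exp] at this
    linarith

lemma Box_compact (s t : ℝ) : IsCompact (Box s t) := by
  apply Metric.isCompact_of_isClosed_isBounded
  · have h1 : IsClosed {z : ℂ | |z.re| ≤ 2*Real.exp s} :=
      isClosed_le (Complex.continuous_re.abs) continuous_const
    have h2 : IsClosed {z : ℂ | 1 - Real.log (1+t) ≤ z.im} :=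
      isClosed_le continuous_const Complex.continuous_im
    have h3 : IsClosed {z : ℂ | z.im ≤ 1} := isClosed_le Complex.continuous_im continuous_const
    exact (h1.inter (h2.inter h3))
  · rw [Metric.isBounded_iff_subset_closedBall 0]
    refine ⟨2*Real.exp s + (|1 - Real.log (1+t)| + 1), ?_⟩
    rintro z ⟨h1, h2, h3⟩
    rw [Metric.mem_closedBall, dist_zero_right]
    have him : |z.im| ≤ |1 - Real.log (1+t)| + 1 := by
      rw [abs_le]
      constructor
      · have := neg_abs_le (1 - Real.log (1+t)); linarith
      · have h4 : (1:ℝ) ≤ |1 - Real.log (1+t)| + 1 :=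
          le_add_of_nonneg_left (abs_nonneg _)
        linarith
    calc ‖z‖ ≤ |z.re| + |z.im| := Complex.norm_le_abs_re_add_abs_im z
    _ ≤ 2*Real.exp s + (|1 - Real.log (1+t)| + 1) := add_le_add h1 him

lemma Box_measurableSet (s t : ℝ) : MeasurableSet (Box s t) :=
  (Box_compact s t).isClosed.measurableSet

lemma integrableOn_Box (s t : ℝ) (ht : 0 ≤ t) :
    IntegrableOn (fun z => (lam z)^2) (Box s t) volume := by
  apply Measure.integrableOn_of_bounded ((Box_compact s t).measure_lt_top).ne
    lam_sq_measurable.aestronglyMeasurable (M := (1+t)^2)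
  apply (ae_restrict_iff' (Box_measurableSet s t)).mpr
  apply Filter.Eventually.of_forall
  rintro z ⟨_, h2, h3⟩
  have hlam : lam z ≤ 1 + t := by
    unfold lam
    split_ifs with h
    · have hz1 : z.im = 1 := le_antisymm h3 h
      rw [hz1]; norm_num; linarith
    · have h5 := Real.exp_le_exp.mpr (show 1 - z.im ≤ Real.log (1+t) by linarith)
      rwa [Real.exp_log (by linarith : (0:ℝ) < 1 + t)] at h5
  have hns : ‖(lam z)^2‖ = (lam z)^2 := by
    rw [Real.norm_eq_abs, abs_of_nonneg]; positivity
  rw [hns]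
  have := (lam_pos z).le
  nlinarith

lemma integrableOn_Aset (s t : ℝ) (ht : 0 ≤ t) :
    IntegrableOn (fun z => (lam z)^2) (Aset s t) volume :=
  (integrableOn_Box s t ht).mono_set (Aset_subset_Box s t ht)

lemma sum_bound (a : ℝ) (ha : 0 ≤ a) : ∃ S : ℝ, 0 ≤ S ∧ ∀ N : ℕ,
    ∑ j ∈ Finset.range N, ((((j:ℝ)+1+a)^2 + ((j:ℝ)+1+a)) * Real.exp (-(j:ℝ)/2)) ≤ S := by
  set x := Real.exp (-(1:ℝ)/2) with hxdef
  have hx0 : 0 < x := Real.exp_pos _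
  have hx1 : x < 1 := by
    rw [hxdef, show (1:ℝ) = Real.exp 0 from (Real.exp_zero).symm]
    exact Real.exp_lt_exp.mpr (by norm_num)
  have hxe : ∀ j : ℕ, Real.exp (-(j:ℝ)/2) = x^j := by
    intro j
    rw [hxdef, ← Real.exp_nat_mul]
    congr 1; ring
  set f : ℕ → ℝ := fun j => (((j:ℝ)+1+a)^2 + ((j:ℝ)+1+a)) * x^j with hfdef
  have hfnonneg : ∀ j : ℕ, 0 ≤ f j := by
    intro j
    apply mul_nonneg _ (pow_nonneg hx0.le j)
    have hj : (0:ℝ) ≤ (j:ℝ) + 1 + a := by positivity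
    nlinarith
  have hfs : Summable f := by
    have hxn : ‖x‖ < 1 := by rw [Real.norm_eq_abs, abs_of_pos hx0]; exact hx1
    have h2 : Summable (fun j : ℕ => ((j:ℝ)^2) * x^j) := by
      simpa using summable_pow_mul_geometric_of_norm_lt_one 2 hxn
    have h1 : Summable (fun j : ℕ => ((j:ℝ)) * x^j) := by
      simpa using summable_pow_mul_geometric_of_norm_lt_one 1 hxn
    have h0 : Summable (fun j : ℕ => x^j) := summable_geometric_of_lt_one hx0.le hx1
    have heq : f = fun j : ℕ => ((j:ℝ)^2*x^j) + ((2*(1+a)+1)*((j:ℝ)*x^j)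
        + ((1+a)^2+(1+a))*(x^j)) := by
      funext j; simp only [hfdef]; ring
    rw [heq]
    exact h2.add ((h1.mul_left _).add (h0.mul_left _))
  refine ⟨∑' j, f j, tsum_nonneg hfnonneg, fun N => ?_⟩
  have h1 : ∑ j ∈ Finset.range N, ((((j:ℝ)+1+a)^2 + ((j:ℝ)+1+a)) * Real.exp (-(j:ℝ)/2))
      = ∑ j ∈ Finset.range N, f j := by
    apply Finset.sum_congr rfl
    intro j _
    rw [hfdef]
    simp only
    rw [hxe j]
  rw [h1]
  exact Summable.sum_le_tsum _ (fun j _ => hfnonneg j) hfs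

/- STATEMENT 16: for the surface Y with a = i, suppose length(β_r) ≤ e^{r/2}/c,
that every p ∈ Q ∩ D(a, r) admits s ∈ [0, r] with its projection p′ ∈ β_s and
d_Q(p, p′) ≤ r − s + O(1), and that the area of
{p ∈ Q : p′ ∈ β_s, d_Q(p, p′) ≤ t} is O(t² + t)·length(β_s).  Then
area(Q ∩ D(a, r)) ≤ C·length(β_r) for all sufficiently large r. -/
theorem area_Q_upper_bound
    (c : ℝ) (hc : 0 < c)
    (hlen : ∀ r : ℝ, lenBeta r ≤ Real.exp (r / 2) / c)
    (K₁ : ℝ)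
    (hproj : ∀ r : ℝ, ∀ p : ℂ, p.im < 1 → Ydist Complex.I p < r →
      ∃ s : ℝ, 0 ≤ s ∧ s ≤ r ∧ Ydist Complex.I (projBeta p) < s ∧
        dQ p (projBeta p) ≤ r - s + K₁)
    (K₂ : ℝ) (hK₂ : 0 < K₂)
    (harea : ∀ s t : ℝ, 0 ≤ t →
      Yarea {p : ℂ | p.im < 1 ∧ Ydist Complex.I (projBeta p) < s ∧
          dQ p (projBeta p) ≤ t}
        ≤ K₂ * (t ^ 2 + t) * lenBeta s) :
    ∃ C : ℝ, 0 < C ∧ ∀ᶠ r : ℝ in Filter.atTop,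
      Yarea (Dball r ∩ {z : ℂ | z.im < 1}) ≤ C * lenBeta r := by
  set a := max K₁ 0 with hadef
  have ha : 0 ≤ a := le_max_right _ _
  have haK : K₁ ≤ a := le_max_left _ _
  obtain ⟨S, hS0, hSb⟩ := sum_bound a ha
  set C : ℝ := K₂ * S / c * (Real.exp (3/2) / 2) + 1 with hCdef
  have hC0 : 0 < C := by
    have h1 : 0 ≤ K₂ * S / c := by positivity
    have h2 : 0 ≤ Real.exp (3/2) / 2 := by positivity
    have h3 := mul_nonneg h1 h2
    rw [hCdef]
    linarith
  refine ⟨C, hC0, ?_⟩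
  rw [Filter.eventually_atTop]
  refine ⟨4, fun r hr => ?_⟩
  set f : ℂ → ℝ := fun z => (lam z)^2 with hfdef
  set U : Set ℂ := Dball r ∩ {z : ℂ | z.im < 1} with hUdef
  have hlenpos : 0 ≤ lenBeta r := lenBeta_nonneg r
  by_cases hInt : IntegrableOn f U volume
  · -- main case
    set N : ℕ := ⌈r⌉₊ with hNdef
    set t : ℕ → ℝ := fun j => (j:ℝ) + 1 + a with htdef
    have htpos : ∀ j : ℕ, 0 ≤ t j := by intro j; simp only [htdef]; positivity
    set A : ℕ → Set ℂ := fun j => Aset (r - j) (t j) with hAdef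
    -- covering
    have hcover : U ⊆ ⋃ j ∈ Finset.range (N+1), A j := by
      rintro p ⟨hpD, hpQ⟩
      obtain ⟨s, hs0, hsr, hsY, hsd⟩ := hproj r p hpQ hpD
      set j : ℕ := ⌊r - s⌋₊ with hjdef
      have hj1 : (j:ℝ) ≤ r - s := Nat.floor_le (by linarith)
      have hj2 : r - s < (j:ℝ) + 1 := Nat.lt_floor_add_one _
      have hjN : j ≤ N := by
        apply le_trans (Nat.floor_mono (show r - s ≤ r by linarith))
        exact Nat.floor_le_ceil r
      apply Set.mem_biUnion (Finset.mem_range.mpr (Nat.lt_succ_of_le hjN))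
      refine ⟨hpQ, ?_, ?_⟩
      · exact lt_of_lt_of_le hsY (by linarith)
      · simp only [htdef]; linarith
    -- integral over U bounded by sum of integrals over A j
    have hIntA : ∀ j ∈ Finset.range (N+1), IntegrableOn f (A j) volume := by
      intro j _
      exact integrableOn_Aset _ _ (htpos j)
    have hstepA : Yarea U ≤ ∑ j ∈ Finset.range (N+1), Yarea (A j) := by
      have hle : volume.restrict U ≤ ∑ j ∈ Finset.range (N+1), volume.restrict (A j) := by
        rw [Measure.le_iff]
        intro E hE
        rw [Measure.restrict_apply hE]
        have h1 : volume (E ∩ U) ≤ volume (⋃ j ∈ Finset.range (N+1), E ∩ A j) := by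
          apply measure_mono
          intro z hz
          obtain ⟨hzE, hzU⟩ := hz
          obtain ⟨Aj, ⟨j, hj⟩, hzA⟩ := hcover hzU
          simp only at hj
          rw [← hj] at hzA
          simp only [Set.mem_iUnion] at hzA ⊢
          obtain ⟨hjr, hzA⟩ := hzA
          exact ⟨j, hjr, hzE, hzA⟩
        refine le_trans h1 (le_trans (measure_biUnion_finset_le _ _) ?_)
        rw [show ((∑ j ∈ Finset.range (N+1), volume.restrict (A j)) E)
            = ∑ j ∈ Finset.range (N+1), (volume.restrict (A j)) E by
          rw [Measure.coe_finset_sum]; simp]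
        apply Finset.sum_le_sum
        intro j _
        rw [Measure.restrict_apply hE]
      have hintsum : Integrable f (∑ j ∈ Finset.range (N+1), volume.restrict (A j)) :=
        (integrable_finset_sum_measure).mpr hIntA
      have h2 : ∫ z in U, f z ≤ ∫ z, f z ∂(∑ j ∈ Finset.range (N+1), volume.restrict (A j)) := by
        apply integral_mono_measure hle
        · apply Filter.Eventually.of_forall
          intro z
          positivity
        · exact hintsum
      rw [integral_finset_sum_measure hIntA] at h2
      exact h2
    -- bound each Yarea (A j)
    have hstepB : ∀ j ∈ Finset.range (N+1),
        Yarea (A j) ≤ (K₂ * Real.exp (r/2) / c) * ((t j^2 + t j) * Real.exp (-(j:ℝ)/2)) := by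
      intro j _
      have h1 : Yarea (A j) ≤ K₂ * (t j^2 + t j) * lenBeta (r - j) := by
        have := harea (r - j) (t j) (htpos j)
        exact this
      have h2 : lenBeta (r - j) ≤ Real.exp ((r - j)/2) / c := hlen _
      have h3 : 0 ≤ K₂ * (t j^2 + t j) := by
        have := htpos j
        nlinarith
      have h4 : Yarea (A j) ≤ K₂ * (t j^2 + t j) * (Real.exp ((r - j)/2) / c) := by
        calc Yarea (A j) ≤ K₂ * (t j^2 + t j) * lenBeta (r - j) := h1
        _ ≤ K₂ * (t j^2 + t j) * (Real.exp ((r - j)/2) / c) :=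
            mul_le_mul_of_nonneg_left h2 h3
      have h5 : Real.exp ((r - (j:ℝ))/2) = Real.exp (r/2) * Real.exp (-(j:ℝ)/2) := by
        rw [← Real.exp_add]; congr 1; ring
      rw [h5] at h4
      calc Yarea (A j) ≤ K₂ * (t j^2 + t j) * (Real.exp (r/2) * Real.exp (-(j:ℝ)/2) / c) := h4
      _ = (K₂ * Real.exp (r/2) / c) * ((t j^2 + t j) * Real.exp (-(j:ℝ)/2)) := by ring
    -- sum up
    have hstepC : Yarea U ≤ (K₂ * Real.exp (r/2) / c) * S := by
      refine le_trans hstepA (le_trans (Finset.sum_le_sum hstepB) ?_)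
      rw [← Finset.mul_sum]
      apply mul_le_mul_of_nonneg_left _ (by positivity)
      exact hSb (N+1)
    -- lenBeta lower bound
    have hlenlow : Real.exp (r/2) ≤ Real.exp (3/2) / 2 * lenBeta r := by
      have h1 := lenBeta_lower r hr
      have h2 : Real.exp (r/2) = Real.exp (3/2) * Real.exp ((r-3)/2) := by
        rw [← Real.exp_add]; congr 1; ring
      rw [h2]
      have h3 : Real.exp ((r-3)/2) ≤ lenBeta r / 2 := by linarith
      calc Real.exp (3/2) * Real.exp ((r-3)/2) ≤ Real.exp (3/2) * (lenBeta r / 2) :=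
          mul_le_mul_of_nonneg_left h3 (Real.exp_pos _).le
      _ = Real.exp (3/2) / 2 * lenBeta r := by ring
    calc Yarea U ≤ (K₂ * Real.exp (r/2) / c) * S := hstepC
    _ = (K₂ * S / c) * Real.exp (r/2) := by ring
    _ ≤ (K₂ * S / c) * (Real.exp (3/2) / 2 * lenBeta r) :=
        mul_le_mul_of_nonneg_left hlenlow (by positivity)
    _ = (K₂ * S / c * (Real.exp (3/2) / 2)) * lenBeta r := by ring
    _ ≤ C * lenBeta r := by
        apply mul_le_mul_of_nonneg_right _ hlenpos
        rw [hCdef]; linarith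
  · -- non-integrable case : the Bochner integral is zero
    have : Yarea U = 0 := integral_undef hInt
    rw [show Yarea (Dball r ∩ {z : ℂ | z.im < 1}) = Yarea U from rfl, this]
    positivity
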